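/- arXiv:1308.4822 — 2 statements merged into one kernel-verified Lean document; each statement's English description precedes it below -/
import Mathlib

section
/- Let L be a bounded lattice and X = D♭(L). Then for each a ∈ L the evaluation map e_a belongs to MPE(X,2), and the map e : L → MPE(X,2) given by a ↦ e_a is an embedding of bounded lattices of L into the complete lattice (MPE(X,2), ≤); thus (e, MPE(X,2)) is a completion of L. -/
namespace CanExt

open Classical

/-- A partial map from `X` into the two-element chain `{0,1}` (encoded as `Bool`,
with `false` playing the role of `0` and `true` the role of `1`);
`φ x = none` means `x` is outside the domain of `φ`. -/
abbrev PMap (X : Type*) := X → Option Bool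

/-- The preimage of `1` of a partial map. -/
def pre1 {X : Type*} (φ : PMap X) : Set X := {x | φ x = some true}

/-- The preimage of `0` of a partial map. -/
def pre0 {X : Type*} (φ : PMap X) : Set X := {x | φ x = some false}

/-- A partial map is `E`-preserving if whenever `x, y` lie in its domain and
`(x,y) ∈ E`, then `φ x ≤ φ y`. -/
def EPres {X : Type*} (E : X → X → Prop) (φ : PMap X) : Prop :=
  ∀ ⦃x y : X⦄, E x y → ∀ ⦃a b : Bool⦄, φ x = some a → φ y = some b → a ≤ b

/-- `PExt ψ φ` : the partial map `ψ` extends the partial map `φ`. -/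
def PExt {X : Type*} (ψ φ : PMap X) : Prop :=
  ∀ ⦃x : X⦄ ⦃a : Bool⦄, φ x = some a → ψ x = some a

/-- The set of maximal partial `E`-preserving maps from `(X,E)` into the
two-element chain `2`. -/
def MPE {X : Type*} (E : X → X → Prop) : Set (PMap X) :=
  {φ | EPres E φ ∧ ∀ ψ : PMap X, EPres E ψ → PExt ψ φ → ψ = φ}

/-- A partial morphism from a graph with topology `(X,E,t)` to `2_τ`:
the preimages of `1` and `0` are `t`-closed (equivalently, the domain is
closed and the restriction to the domain is continuous into discrete `2`),
and the map is `E`-preserving. -/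
def PMorphT {X : Type*} (E : X → X → Prop) (t : TopologicalSpace X) (φ : PMap X) : Prop :=
  EPres E φ ∧ @IsClosed X t (pre1 φ) ∧ @IsClosed X t (pre0 φ)

/-- The set of maximal partial morphisms from `(X,E,t)` to `2_τ`. -/
def MPM {X : Type*} (E : X → X → Prop) (t : TopologicalSpace X) : Set (PMap X) :=
  {φ | PMorphT E t φ ∧ ∀ ψ : PMap X, PMorphT E t ψ → PExt ψ φ → ψ = φ}

/-- The relation `E` between partial maps on a lattice `L`:
`(f,g) ∈ E` iff `f x ≤ g x` for all `x ∈ dom f ∩ dom g`. -/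
def ErelP {L : Type*} (f g : PMap L) : Prop :=
  ∀ ⦃x : L⦄ ⦃a b : Bool⦄, f x = some a → g x = some b → a ≤ b

/-- `f ≤₁ g` iff `f⁻¹(1) ⊆ g⁻¹(1)`. -/
def le1 {L : Type*} (f g : PMap L) : Prop := pre1 f ⊆ pre1 g

/-- `f ≤₂ g` iff `f⁻¹(0) ⊆ g⁻¹(0)`. -/
def le2 {L : Type*} (f g : PMap L) : Prop := pre0 f ⊆ pre0 g

section Lat

variable (L : Type*) [Lattice L] [BoundedOrder L]

/-- A partial homomorphism from a bounded lattice `L` to the two-element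
bounded lattice `2_B`: its domain is a `{0,1}`-sublattice of `L` and the
restriction to the domain is a bounded-lattice homomorphism. -/
def PHom (f : PMap L) : Prop :=
  f ⊥ = some false ∧ f ⊤ = some true ∧
  ∀ ⦃a b : L⦄ ⦃x y : Bool⦄, f a = some x → f b = some y →
    f (a ⊓ b) = some (x ⊓ y) ∧ f (a ⊔ b) = some (x ⊔ y)

/-- The set of maximal partial homomorphisms (MPHs) from `L` to `2_B`. -/
def MPHset : Set (PMap L) := {f | PHom L f ∧ ∀ g : PMap L, PHom L g → PExt g f → g = f}

/-- The underlying set of the graph `D♭(L)`. -/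
abbrev MPHsub := {f : PMap L // f ∈ MPHset L}

/-- The relation `E` on `MPH(L, 2_B)`, giving the graph `D♭(L)`. -/
def EM (f g : MPHsub L) : Prop := ErelP f.1 g.1

/-- The evaluation map `e_a` on `MPH(L,2_B)` : `e_a(f) = f(a)` if `a ∈ dom f`. -/
def evalM (a : L) : PMap (MPHsub L) := fun f => f.1 a

/-- `V_a = {f ∈ MPH(L,2_B) : f(a) = 0}`. -/
def VaM (a : L) : Set (MPHsub L) := {f | f.1 a = some false}

/-- `W_a = {f ∈ MPH(L,2_B) : f(a) = 1}`. -/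
def WaM (a : L) : Set (MPHsub L) := {f | f.1 a = some true}

/-- The topology on `MPH(L,2_B)` with the sets `V_a`, `W_a` as a subbasis of
closed sets. -/
def tauM : TopologicalSpace (MPHsub L) :=
  TopologicalSpace.generateFrom {U | ∃ a : L, U = (VaM L a)ᶜ ∨ U = (WaM L a)ᶜ}

/-- A (nonempty) lattice filter. -/
def IsLatFilter (F : Set L) : Prop :=
  F.Nonempty ∧ (∀ ⦃a b : L⦄, a ∈ F → a ≤ b → b ∈ F) ∧
    (∀ ⦃a b : L⦄, a ∈ F → b ∈ F → a ⊓ b ∈ F)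

/-- A (nonempty) lattice ideal. -/
def IsLatIdeal (I : Set L) : Prop :=
  I.Nonempty ∧ (∀ ⦃a b : L⦄, a ∈ I → b ≤ a → b ∈ I) ∧
    (∀ ⦃a b : L⦄, a ∈ I → b ∈ I → a ⊔ b ∈ I)

/-- The set of special partial homomorphisms (SPHs) from `L` to `2_B`:
`f⁻¹(1)` is a nonempty filter, `f⁻¹(0)` is a nonempty ideal, and they are
disjoint. -/
def SPHset : Set (PMap L) :=
  {f | IsLatFilter L (pre1 f) ∧ IsLatIdeal L (pre0 f) ∧ Disjoint (pre1 f) (pre0 f)}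

/-- The underlying set of the graph `D̄♭(L)`. -/
abbrev SPHsub := {f : PMap L // f ∈ SPHset L}

/-- The relation `E` on `SPH(L, 2_B)`, giving the graph `D̄♭(L)`. -/
def ES (f g : SPHsub L) : Prop := ErelP f.1 g.1

/-- The evaluation map `ē_a` on `SPH(L,2_B)`. -/
def evalS (a : L) : PMap (SPHsub L) := fun f => f.1 a

/-- `V_a = {f ∈ SPH(L,2_B) : f(a) = 0}`. -/
def VaS (a : L) : Set (SPHsub L) := {f | f.1 a = some false}

/-- `W_a = {f ∈ SPH(L,2_B) : f(a) = 1}`. -/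
def WaS (a : L) : Set (SPHsub L) := {f | f.1 a = some true}

/-- The topology on `SPH(L,2_B)` with the sets `V_a`, `W_a` as a subbasis of
closed sets. -/
def tauS : TopologicalSpace (SPHsub L) :=
  TopologicalSpace.generateFrom {U | ∃ a : L, U = (VaS L a)ᶜ ∨ U = (WaS L a)ᶜ}

/-- The carrier of the completion built from `D♭(L)`. -/
abbrev CX := {φ : PMap (MPHsub L) // φ ∈ MPE (EM L)}

/-- The carrier of the completion built from `D̄♭(L)`. -/
abbrev CY := {φ : PMap (SPHsub L) // φ ∈ MPE (ES L)}

end Lat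

/-!
For a reflexive graph `(X, E)` an MPE `φ` is determined by the pair `(φ⁻¹(1), φ⁻¹(0))`, and
maximality says precisely that each of these sets is the polar of the other for the relation
"no `E`-edge". So `MPE(X,2)` is the concept lattice of that relation, ordered by the `1`-sets.

For `X = D♭(L)` the `1`- and `0`-preimages of an MPH form a disjoint filter–ideal pair, and by Zorn
every such pair extends to an MPH. Extending `(f⁻¹(1), ↓a)` and `(↑a, f⁻¹(0))` shows that
`(e_a⁻¹(1), e_a⁻¹(0))` is a concept, and extending `(↑a, ↓b)` when `a ≰ b` separates `e_a` from
`e_b`. Meets of concepts intersect the `1`-sets and joins intersect the `0`-sets, so the identities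
`e_{a ⊓ b}⁻¹(1) = e_a⁻¹(1) ∩ e_b⁻¹(1)` and `e_{a ⊔ b}⁻¹(0) = e_a⁻¹(0) ∩ e_b⁻¹(0)`, which hold
because MPH preimages are filters and ideals, make `a ↦ e_a` a lattice embedding.
-/

section Graph

variable {X : Type*} {E : X → X → Prop}

/-- The partial map that is `1` on `A`, `0` on `B \ A` and undefined elsewhere. -/
noncomputable def ofPreimages (A B : Set X) : PMap X := fun x ↦
  if x ∈ A then some true else if x ∈ B then some false else none

lemma ofPreimages_of_notMem {A B : Set X} {x : X} (hA : x ∉ A) (hB : x ∉ B) :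
    ofPreimages A B x = none := by
  simp [ofPreimages, hA, hB]

lemma ofPreimages_eq_true_iff {A B : Set X} {x : X} : ofPreimages A B x = some true ↔ x ∈ A := by
  by_cases hA : x ∈ A <;> simp [ofPreimages, hA]

lemma ofPreimages_eq_false_iff {A B : Set X} (hAB : Disjoint A B) {x : X} :
    ofPreimages A B x = some false ↔ x ∈ B := by
  by_cases hA : x ∈ A <;> simp [ofPreimages, hA, hAB.notMem_of_mem_left]

lemma pre1_ofPreimages (A B : Set X) : pre1 (ofPreimages A B) = A :=
  Set.ext fun _ ↦ ofPreimages_eq_true_iff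

lemma pre0_ofPreimages {A B : Set X} (hAB : Disjoint A B) : pre0 (ofPreimages A B) = B :=
  Set.ext fun _ ↦ ofPreimages_eq_false_iff hAB

lemma ofPreimages_pre1_pre0 (φ : PMap X) : ofPreimages (pre1 φ) (pre0 φ) = φ := by
  funext x
  rcases h : φ x with _ | _ | _ <;> simp [ofPreimages, pre1, pre0, h]

lemma pExt_update {φ : PMap X} {x : X} (hx : φ x = none) (b : Bool) :
    PExt (Function.update φ x (some b)) φ := by
  intro y a hy
  have hyx : y ≠ x := by rintro rfl; simp [hx] at hy
  simpa [Function.update_of_ne hyx] using hy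

lemma EPres.update {φ : PMap X} (hφ : EPres E φ) {x : X} {b : Bool}
    (hout : ∀ ⦃y c⦄, E x y → φ y = some c → b ≤ c)
    (hin : ∀ ⦃y c⦄, E y x → φ y = some c → c ≤ b) :
    EPres E (Function.update φ x (some b)) := by
  intro u v huv c d hu hv
  by_cases hux : u = x <;> by_cases hvx : v = x
  · subst hux hvx; simp_all
  · subst hux; simp only [Function.update_self, Option.some_inj] at hu
    exact hu ▸ hout huv (by simpa [Function.update_of_ne hvx] using hv)
  · subst hvx; simp only [Function.update_self, Option.some_inj] at hv
    exact hv ▸ hin huv (by simpa [Function.update_of_ne hux] using hu)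
  · simp only [Function.update_of_ne hux, Function.update_of_ne hvx] at hu hv
    exact hφ huv hu hv

lemma ne_none_of_mem_MPE {φ : PMap X} (hφ : φ ∈ MPE E) {x : X} {b : Bool}
    (h : EPres E (Function.update φ x (some b))) : φ x ≠ none := fun hx ↦ by
  simpa [hx] using congrFun (hφ.2 _ h (pExt_update hx b)) x

lemma erelP_of_pre1_subset {f g : PMap X} (h : pre1 f ⊆ pre1 g) : ErelP f g := by
  intro x a b hf hg
  cases a
  · exact Bool.false_le b
  · exact (Option.some_inj.1 ((h hf).symm.trans hg)).le

lemma erelP_of_pre0_subset {f g : PMap X} (h : pre0 g ⊆ pre0 f) : ErelP f g := by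
  intro x a b hf hg
  cases b
  · exact (Option.some_inj.1 (hf.symm.trans (h hg))).le
  · exact Bool.le_true a

lemma EPres.pre0_subset_upperPolar {φ : PMap X} (hφ : EPres E φ) :
    pre0 φ ⊆ upperPolar (fun x y ↦ ¬E x y) (pre1 φ) :=
  fun _ hy _ hx hxy ↦ absurd (hφ hxy hx hy) (by decide)

lemma EPres.pre1_subset_lowerPolar {φ : PMap X} (hφ : EPres E φ) :
    pre1 φ ⊆ lowerPolar (fun x y ↦ ¬E x y) (pre0 φ) :=
  fun _ hx _ hy hxy ↦ absurd (hφ hxy hx hy) (by decide)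

lemma upperPolar_pre1_of_mem_MPE [Std.Refl E] {φ : PMap X} (hφ : φ ∈ MPE E) :
    upperPolar (fun x y ↦ ¬E x y) (pre1 φ) = pre0 φ := by
  refine subset_antisymm (fun y hy ↦ ?_) hφ.1.pre0_subset_upperPolar
  rcases hφy : φ y with _ | _ | _
  -- `y` receives no edge from the `1`-set, so sending it to `0` keeps `φ` `E`-preserving
  · refine absurd hφy (ne_none_of_mem_MPE hφ (b := false) (hφ.1.update
      (fun _ _ _ _ ↦ Bool.false_le _) fun z c hzy hz ↦ ?_))
    cases c
    · exact le_rfl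
    · exact absurd hzy (hy hz)
  · exact hφy
  · exact absurd (refl_of E y) (hy hφy)

lemma lowerPolar_pre0_of_mem_MPE [Std.Refl E] {φ : PMap X} (hφ : φ ∈ MPE E) :
    lowerPolar (fun x y ↦ ¬E x y) (pre0 φ) = pre1 φ := by
  refine subset_antisymm (fun x hx ↦ ?_) hφ.1.pre1_subset_lowerPolar
  rcases hφx : φ x with _ | _ | _
  · refine absurd hφx (ne_none_of_mem_MPE hφ (b := true) (hφ.1.update
      (fun z c hxz hz ↦ ?_) fun _ _ _ _ ↦ Bool.le_true _))
    cases c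
    · exact absurd hxz (hx hz)
    · exact le_rfl
  · exact absurd (refl_of E x) (hx hφx)
  · exact hφx

instance [Std.Refl E] : Std.Irrefl (fun x y ↦ ¬E x y) := ⟨fun x h ↦ h (refl_of E x)⟩

lemma ofPreimages_mem_MPE [Std.Refl E] (c : Concept X X (fun x y ↦ ¬E x y)) :
    ofPreimages c.extent c.intent ∈ MPE E := by
  have hd : Disjoint c.extent c.intent := c.disjoint_extent_intent
  refine ⟨?_, fun ψ hψ hext ↦ funext fun x ↦ ?_⟩
  · intro x y hxy a b hx hy
    cases a
    · exact Bool.false_le b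
    cases b
    · exact absurd hxy (c.rel_extent_intent (ofPreimages_eq_true_iff.1 hx)
        ((ofPreimages_eq_false_iff hd).1 hy))
    · exact le_rfl
  by_cases hxA : x ∈ c.extent
  · rw [ofPreimages_eq_true_iff.2 hxA, hext (ofPreimages_eq_true_iff.2 hxA)]
  by_cases hxB : x ∈ c.intent
  · rw [(ofPreimages_eq_false_iff hd).2 hxB, hext ((ofPreimages_eq_false_iff hd).2 hxB)]
  rw [ofPreimages_of_notMem hxA hxB]
  rcases hψx : ψ x with _ | _ | _
  · rfl
  · rw [← c.upperPolar_extent] at hxB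
    simp only [mem_upperPolar_iff, not_forall, not_not] at hxB
    obtain ⟨z, hz, hzx⟩ := hxB
    exact absurd (hψ hzx (hext (ofPreimages_eq_true_iff.2 hz)) hψx) (by decide)
  · rw [← c.lowerPolar_intent] at hxA
    simp only [mem_lowerPolar_iff, not_forall, not_not] at hxA
    obtain ⟨y, hy, hxy⟩ := hxA
    exact absurd (hψ hxy hψx (hext ((ofPreimages_eq_false_iff hd).2 hy))) (by decide)

noncomputable def mpeEquivConcept [Std.Refl E] :
    {φ // φ ∈ MPE E} ≃ Concept X X (fun x y ↦ ¬E x y) where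
  toFun φ := ⟨pre1 φ.1, pre0 φ.1, upperPolar_pre1_of_mem_MPE φ.2, lowerPolar_pre0_of_mem_MPE φ.2⟩
  invFun c := ⟨ofPreimages c.extent c.intent, ofPreimages_mem_MPE c⟩
  left_inv φ := Subtype.ext (ofPreimages_pre1_pre0 φ.1)
  right_inv _ := Concept.ext (pre1_ofPreimages _ _)

end Graph

section Lattice

lemma _root_.InfClosed.upperClosure {α : Type*} [SemilatticeInf α] {s : Set α} (hs : InfClosed s) :
    InfClosed (upperClosure s : Set α) := by
  rintro a ⟨u, hu, hua⟩ b ⟨v, hv, hvb⟩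
  exact ⟨u ⊓ v, hs hu hv, inf_le_inf hua hvb⟩

lemma _root_.SupClosed.lowerClosure {α : Type*} [SemilatticeSup α] {s : Set α} (hs : SupClosed s) :
    SupClosed (lowerClosure s : Set α) := by
  rintro a ⟨u, hu, hau⟩ b ⟨v, hv, hbv⟩
  exact ⟨u ⊔ v, hs hu hv, sup_le_sup hau hbv⟩

variable {L : Type*} [Lattice L] [BoundedOrder L]

structure IsFilterIdealPair (F I : Set L) : Prop where
  isUpperSet : IsUpperSet F
  infClosed : InfClosed F
  top_mem : ⊤ ∈ F
  isLowerSet : IsLowerSet I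
  supClosed : SupClosed I
  bot_mem : ⊥ ∈ I
  disjoint : Disjoint F I

namespace IsFilterIdealPair

variable {F I : Set L}

lemma inf_mem_iff (h : IsFilterIdealPair F I) {a b : L} : a ⊓ b ∈ F ↔ a ∈ F ∧ b ∈ F :=
  ⟨fun hab ↦ ⟨h.isUpperSet inf_le_left hab, h.isUpperSet inf_le_right hab⟩,
    fun ⟨ha, hb⟩ ↦ h.infClosed ha hb⟩

lemma sup_mem_iff (h : IsFilterIdealPair F I) {a b : L} : a ⊔ b ∈ I ↔ a ∈ I ∧ b ∈ I :=
  ⟨fun hab ↦ ⟨h.isLowerSet le_sup_left hab, h.isLowerSet le_sup_right hab⟩,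
    fun ⟨ha, hb⟩ ↦ h.supClosed ha hb⟩

lemma pHom (h : IsFilterIdealPair F I) : PHom L (ofPreimages F I) := by
  refine ⟨(ofPreimages_eq_false_iff h.disjoint).2 h.bot_mem, ofPreimages_eq_true_iff.2 h.top_mem, ?_⟩
  intro a b x y ha hb
  cases x <;> cases y <;>
    simp only [Bool.min_eq_and, Bool.max_eq_or, Bool.and_self, Bool.or_self, Bool.false_and,
      Bool.true_and, Bool.false_or, Bool.true_or, ofPreimages_eq_true_iff,
      ofPreimages_eq_false_iff h.disjoint] at ha hb ⊢
  · exact ⟨h.isLowerSet inf_le_left ha, h.supClosed ha hb⟩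
  · exact ⟨h.isLowerSet inf_le_left ha, h.isUpperSet le_sup_right hb⟩
  · exact ⟨h.isLowerSet inf_le_right hb, h.isUpperSet le_sup_left ha⟩
  · exact ⟨h.infClosed ha hb, h.isUpperSet le_sup_left ha⟩

end IsFilterIdealPair

namespace PHom

variable {f : PMap L}

lemma isFilterIdealPair_closure (hf : PHom L f) :
    IsFilterIdealPair (upperClosure (pre1 f) : Set L) (lowerClosure (pre0 f)) where
  isUpperSet := (upperClosure _).upper
  infClosed := InfClosed.upperClosure fun a ha b hb ↦ by simpa [pre1] using (hf.2.2 ha hb).1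
  top_mem := subset_upperClosure hf.2.1
  isLowerSet := (lowerClosure _).lower
  supClosed := SupClosed.lowerClosure fun a ha b hb ↦ by simpa [pre0] using (hf.2.2 ha hb).2
  bot_mem := subset_lowerClosure hf.1
  disjoint := Set.disjoint_left.2 fun x ⟨u, hu, hux⟩ ⟨w, hw, hxw⟩ ↦ by
    -- `u ≤ w`, so `f w = f (u ⊔ w) = 1 ⊔ 0`
    have := (hf.2.2 hu hw).2
    rw [sup_eq_right.2 (hux.trans hxw), hw] at this
    simp at this

lemma pExt_closure (hf : PHom L f) :
    PExt (ofPreimages (upperClosure (pre1 f) : Set L) (lowerClosure (pre0 f))) f := by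
  intro x a hx
  cases a
  · exact (ofPreimages_eq_false_iff hf.isFilterIdealPair_closure.disjoint).2
      (subset_lowerClosure hx)
  · exact ofPreimages_eq_true_iff.2 (subset_upperClosure hx)

end PHom

lemma isFilterIdealPair_of_mem_MPHset {f : PMap L} (hf : f ∈ MPHset L) :
    IsFilterIdealPair (pre1 f) (pre0 f) := by
  have h := hf.1.isFilterIdealPair_closure
  rw [← hf.2 _ h.pHom hf.1.pExt_closure, pre1_ofPreimages, pre0_ofPreimages h.disjoint]
  exact h

lemma isFilterIdealPair_biUnion {c : Set (Set L × Set L)} (hc : IsChain (· ≤ ·) c)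
    (hne : c.Nonempty) (h : ∀ p ∈ c, IsFilterIdealPair p.1 p.2) :
    IsFilterIdealPair (⋃ p ∈ c, p.1) (⋃ p ∈ c, p.2) := by
  obtain ⟨p₀, hp₀⟩ := hne
  refine ⟨isUpperSet_iUnion₂ fun p hp ↦ (h p hp).isUpperSet, ?_,
    Set.mem_iUnion₂.2 ⟨p₀, hp₀, (h p₀ hp₀).top_mem⟩,
    isLowerSet_iUnion₂ fun p hp ↦ (h p hp).isLowerSet, ?_,
    Set.mem_iUnion₂.2 ⟨p₀, hp₀, (h p₀ hp₀).bot_mem⟩, Set.disjoint_left.2 ?_⟩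
  · intro a ha b hb
    obtain ⟨p, hp, ha⟩ := Set.mem_iUnion₂.1 ha
    obtain ⟨q, hq, hb⟩ := Set.mem_iUnion₂.1 hb
    obtain ⟨r, hr, hpr, hqr⟩ := hc.directedOn p hp q hq
    exact Set.mem_iUnion₂.2 ⟨r, hr, (h r hr).infClosed (hpr.1 ha) (hqr.1 hb)⟩
  · intro a ha b hb
    obtain ⟨p, hp, ha⟩ := Set.mem_iUnion₂.1 ha
    obtain ⟨q, hq, hb⟩ := Set.mem_iUnion₂.1 hb
    obtain ⟨r, hr, hpr, hqr⟩ := hc.directedOn p hp q hq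
    exact Set.mem_iUnion₂.2 ⟨r, hr, (h r hr).supClosed (hpr.2 ha) (hqr.2 hb)⟩
  · intro a ha ha'
    obtain ⟨p, hp, ha⟩ := Set.mem_iUnion₂.1 ha
    obtain ⟨q, hq, ha'⟩ := Set.mem_iUnion₂.1 ha'
    obtain ⟨r, hr, hpr, hqr⟩ := hc.directedOn p hp q hq
    exact (h r hr).disjoint.notMem_of_mem_left (hpr.1 ha) (hqr.2 ha')

lemma ofPreimages_mem_MPHset {F I : Set L}
    (hmax : Maximal (fun p : Set L × Set L ↦ IsFilterIdealPair p.1 p.2) (F, I)) :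
    ofPreimages F I ∈ MPHset L := by
  have h : IsFilterIdealPair F I := hmax.prop
  refine ⟨h.pHom, fun g hg hext ↦ ?_⟩
  have hF : F ⊆ pre1 g := fun x hx ↦ hext (ofPreimages_eq_true_iff.2 hx)
  have hI : I ⊆ pre0 g := fun x hx ↦ hext ((ofPreimages_eq_false_iff h.disjoint).2 hx)
  obtain ⟨hF', hI'⟩ := hmax.2 (y := ((upperClosure (pre1 g) : Set L), lowerClosure (pre0 g)))
    hg.isFilterIdealPair_closure ⟨hF.trans subset_upperClosure, hI.trans subset_lowerClosure⟩
  rw [← ofPreimages_pre1_pre0 g, (subset_upperClosure.trans hF').antisymm hF,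
    (subset_lowerClosure.trans hI').antisymm hI]

theorem IsFilterIdealPair.exists_mem_MPHset {F I : Set L} (h : IsFilterIdealPair F I) :
    ∃ g ∈ MPHset L, F ⊆ pre1 g ∧ I ⊆ pre0 g := by
  obtain ⟨⟨F', I'⟩, ⟨hF, hI⟩, hmax⟩ :=
    zorn_le_nonempty₀ {p : Set L × Set L | IsFilterIdealPair p.1 p.2}
      (fun c hcS hc p hp ↦ ⟨(⋃ q ∈ c, q.1, ⋃ q ∈ c, q.2), isFilterIdealPair_biUnion hc ⟨p, hp⟩ hcS,
        fun q hq ↦ ⟨Set.subset_biUnion_of_mem hq, Set.subset_biUnion_of_mem hq⟩⟩) (F, I) h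
  refine ⟨_, ofPreimages_mem_MPHset hmax, ?_, ?_⟩
  · rwa [pre1_ofPreimages]
  · rwa [pre0_ofPreimages hmax.prop.disjoint]

end Lattice

section Evaluation

variable {L : Type*} [Lattice L] [BoundedOrder L]

instance : Std.Refl (EM L) :=
  ⟨fun _ _ _ _ h h' ↦ (Option.some_inj.1 (h.symm.trans h')).le⟩

lemma ePres_evalM (a : L) : EPres (EM L) (evalM L a) := fun _ _ hfg _ _ hf hg ↦ hfg hf hg

lemma exists_EM_apply_eq_false (f : MPHsub L) {a : L} (hfa : f.1 a ≠ some true) :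
    ∃ g : MPHsub L, EM L f g ∧ g.1 a = some false := by
  have hf := isFilterIdealPair_of_mem_MPHset f.2
  have hpair : IsFilterIdealPair (pre1 f.1) (Set.Iic a) :=
    ⟨hf.isUpperSet, hf.infClosed, hf.top_mem, isLowerSet_Iic a, fun _ hx _ hy ↦ sup_le hx hy,
      bot_le, Set.disjoint_left.2 fun _ hx hxa ↦ hfa (hf.isUpperSet hxa hx)⟩
  obtain ⟨g, hg, h1, h0⟩ := hpair.exists_mem_MPHset
  exact ⟨⟨g, hg⟩, erelP_of_pre1_subset h1, h0 le_rfl⟩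

lemma exists_EM_apply_eq_true (f : MPHsub L) {a : L} (hfa : f.1 a ≠ some false) :
    ∃ g : MPHsub L, EM L g f ∧ g.1 a = some true := by
  have hf := isFilterIdealPair_of_mem_MPHset f.2
  have hpair : IsFilterIdealPair (Set.Ici a) (pre0 f.1) :=
    ⟨isUpperSet_Ici a, fun _ hx _ hy ↦ le_inf hx hy, le_top, hf.isLowerSet, hf.supClosed,
      hf.bot_mem, Set.disjoint_left.2 fun _ hax hx ↦ hfa (hf.isLowerSet hax hx)⟩
  obtain ⟨g, hg, h1, h0⟩ := hpair.exists_mem_MPHset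
  exact ⟨⟨g, hg⟩, erelP_of_pre0_subset h0, h1 le_rfl⟩

lemma upperPolar_pre1_evalM (a : L) :
    upperPolar (fun f g ↦ ¬EM L f g) (pre1 (evalM L a)) = pre0 (evalM L a) := by
  refine subset_antisymm (fun g hg ↦ ?_) (ePres_evalM a).pre0_subset_upperPolar
  by_contra hga
  obtain ⟨f, hfg, hfa⟩ := exists_EM_apply_eq_true g hga
  exact hg hfa hfg

lemma lowerPolar_pre0_evalM (a : L) :
    lowerPolar (fun f g ↦ ¬EM L f g) (pre0 (evalM L a)) = pre1 (evalM L a) := by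
  refine subset_antisymm (fun f hf ↦ ?_) (ePres_evalM a).pre1_subset_lowerPolar
  by_contra hfa
  obtain ⟨g, hfg, hga⟩ := exists_EM_apply_eq_false f hfa
  exact hf hga hfg

variable (L) in
noncomputable def evalConcept :
    BoundedLatticeHom L (Concept (MPHsub L) (MPHsub L) (fun f g ↦ ¬EM L f g)) where
  toFun a := ⟨pre1 (evalM L a), pre0 (evalM L a), upperPolar_pre1_evalM a, lowerPolar_pre0_evalM a⟩
  map_sup' _ _ := Concept.ext' <| Set.ext fun f ↦ (isFilterIdealPair_of_mem_MPHset f.2).sup_mem_iff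
  map_inf' _ _ := Concept.ext <| Set.ext fun f ↦ (isFilterIdealPair_of_mem_MPHset f.2).inf_mem_iff
  map_top' := Concept.ext <| Set.eq_univ_of_forall fun f ↦ f.2.1.2.1
  map_bot' := Concept.ext' <| Set.eq_univ_of_forall fun f ↦ f.2.1.1

lemma le_of_pre1_evalM_subset {a b : L} (h : pre1 (evalM L a) ⊆ pre1 (evalM L b)) : a ≤ b := by
  by_contra hab
  have hpair : IsFilterIdealPair (Set.Ici a) (Set.Iic b) :=
    ⟨isUpperSet_Ici a, fun _ hx _ hy ↦ le_inf hx hy, le_top, isLowerSet_Iic b,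
      fun _ hx _ hy ↦ sup_le hx hy, bot_le, Set.Ici_disjoint_Iic.2 hab⟩
  obtain ⟨g, hg, h1, h0⟩ := hpair.exists_mem_MPHset
  have hgb : g b = some true := h (a := ⟨g, hg⟩) (h1 le_rfl)
  exact absurd (Option.some_inj.1 (hgb.symm.trans (h0 le_rfl))) (by decide)

lemma evalConcept_injective : Function.Injective (evalConcept L) := fun _ _ hab ↦
  le_antisymm (le_of_pre1_evalM_subset (congrArg Concept.extent hab).le)
    (le_of_pre1_evalM_subset (congrArg Concept.extent hab).ge)

lemma evalM_mem_MPE (a : L) : evalM L a ∈ MPE (EM L) :=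
  ofPreimages_pre1_pre0 (evalM L a) ▸ ofPreimages_mem_MPE (evalConcept L a)

end Evaluation

/-- For a bounded lattice `L` and `X = D♭(L)`: every
evaluation map `e_a` belongs to `MPE(X,2)`, and `a ↦ e_a` is an embedding of
bounded lattices of `L` into the complete lattice `(MPE(X,2), ≤)`; thus
`(e, MPE(X,2))` is a completion of `L`. -/
theorem stmt_4 (L : Type*) [Lattice L] [BoundedOrder L] :
    (∀ a : L, evalM L a ∈ MPE (EM L)) ∧
    ∃ inst : CompleteLattice (CX L),
      (∀ φ ψ : CX L, inst.le φ ψ ↔ pre1 φ.1 ⊆ pre1 ψ.1) ∧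
      ∃ e : L → CX L,
        (∀ a : L, (e a).1 = evalM L a) ∧
        Function.Injective e ∧
        (∀ a b : L, e (a ⊓ b) = inst.inf (e a) (e b)) ∧
        (∀ a b : L, e (a ⊔ b) = inst.sup (e a) (e b)) ∧
        e ⊤ = inst.top ∧ e ⊥ = inst.bot := by
  let Φ := mpeEquivConcept (E := EM L)
  -- transported along `Φ`, the order on `CX L` is inclusion of `1`-sets by definition
  let e : L → CX L := fun a ↦ ⟨evalM L a, evalM_mem_MPE a⟩
  have hΦe : ∀ a, Φ (e a) = evalConcept L a := fun _ ↦ Concept.ext rfl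
  refine ⟨evalM_mem_MPE, Φ.completeLattice, fun _ _ ↦ Iff.rfl, e, fun _ ↦ rfl,
    fun a b hab ↦ evalConcept_injective (by rw [← hΦe, ← hΦe, hab]),
    fun a b ↦ Φ.eq_symm_apply.2 ?_, fun a b ↦ Φ.eq_symm_apply.2 ?_,
    Φ.eq_symm_apply.2 ?_, Φ.eq_symm_apply.2 ?_⟩
  · rw [hΦe, hΦe, hΦe, map_inf]
  · rw [hΦe, hΦe, hΦe, map_sup]
  · rw [hΦe, map_top]
  · rw [hΦe, map_bot]

end CanExt
end

section
/- Let L be a bounded lattice, X = D♭(L), φ ∈ MPE(X,2) and f,g ∈ MPH(L,2_B). Then (i) if f ≤₂ g and φ(f) = 0, then φ(g) = 0, and (ii) if f ≤₁ g and φ(f) = 1, then φ(g) = 1. -/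
namespace CanExt

open Classical

/-! Setting a maximal `E`-preserving map `φ` to `0` at `g` keeps it `E`-preserving as long as no
`E`-predecessor of `g` takes the value `1`, so by maximality `φ g` is already `0`. If `f ≤₂ g`,
every `E`-predecessor of `g` is one of `f`, and none of those is `1` when `φ f = 0`.
Part (ii) is the order dual, with `E`-successors. -/

section Graph

variable {X : Type*} {E : X → X → Prop} {φ : PMap X}

theorem MPE.apply_eq_of_update {g : X} {b : Bool} (hφ : φ ∈ MPE E) (hg : φ g ≠ some !b)
    (hpres : EPres E (Function.update φ g (some b))) : φ g = some b := by
  have hext : PExt (Function.update φ g (some b)) φ := by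
    intro x a hx
    by_cases hxg : x = g
    · subst hxg
      cases a <;> cases b <;> simp_all
    · rwa [Function.update_of_ne hxg]
  simpa using (congrFun (hφ.2 _ hpres hext) g).symm

theorem EPres.update_false {g : X} (hφ : EPres E φ) (hg : ∀ x, E x g → φ x ≠ some true) :
    EPres E (Function.update φ g (some false)) := by
  intro x y hxy a b hx hy
  by_cases hyg : y = g
  · subst hyg
    by_cases hxg : x = y
    · simp_all
    · rw [Function.update_of_ne hxg] at hx
      cases a <;> simp_all
  · rw [Function.update_of_ne hyg] at hy
    by_cases hxg : x = g
    · simp_all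
    · rw [Function.update_of_ne hxg] at hx
      exact hφ hxy hx hy

theorem EPres.update_true {g : X} (hφ : EPres E φ) (hg : ∀ y, E g y → φ y ≠ some false) :
    EPres E (Function.update φ g (some true)) := by
  intro x y hxy a b hx hy
  by_cases hxg : x = g
  · subst hxg
    by_cases hyg : y = x
    · simp_all
    · rw [Function.update_of_ne hyg] at hy
      cases b <;> simp_all
  · rw [Function.update_of_ne hxg] at hx
    by_cases hyg : y = g
    · simp_all
    · rw [Function.update_of_ne hyg] at hy
      exact hφ hxy hx hy

theorem MPE.eq_false_of_forall_ne_true {g : X} (hφ : φ ∈ MPE E) (hgg : E g g)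
    (hg : ∀ x, E x g → φ x ≠ some true) : φ g = some false :=
  MPE.apply_eq_of_update hφ (hg g hgg) (hφ.1.update_false hg)

theorem MPE.eq_true_of_forall_ne_false {g : X} (hφ : φ ∈ MPE E) (hgg : E g g)
    (hg : ∀ y, E g y → φ y ≠ some false) : φ g = some true :=
  MPE.apply_eq_of_update hφ (hg g hgg) (hφ.1.update_true hg)

theorem MPE.eq_false_of_forall_rel_imp {f g : X} (hφ : φ ∈ MPE E) (hgg : E g g)
    (hfg : ∀ x, E x g → E x f) (hf : φ f = some false) : φ g = some false :=
  MPE.eq_false_of_forall_ne_true hφ hgg fun x hx hxt =>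
    absurd (hφ.1 (hfg x hx) hxt hf) (by decide)

theorem MPE.eq_true_of_forall_rel_imp {f g : X} (hφ : φ ∈ MPE E) (hgg : E g g)
    (hfg : ∀ y, E g y → E f y) (hf : φ f = some true) : φ g = some true :=
  MPE.eq_true_of_forall_ne_false hφ hgg fun y hy hyf =>
    absurd (hφ.1 (hfg y hy) hf hyf) (by decide)

end Graph

section PartialMaps

variable {L : Type*} {f g h : PMap L}

theorem ErelP.refl (f : PMap L) : ErelP f f := by
  intro x a b ha hb
  simp_all

theorem ErelP.of_le2 (hhg : ErelP h g) (hfg : le2 f g) : ErelP h f := by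
  intro x a b ha hb
  cases b
  · exact hhg ha (hfg hb)
  · exact Bool.le_true a

theorem ErelP.of_le1 (hgh : ErelP g h) (hfg : le1 f g) : ErelP f h := by
  intro x a b ha hb
  cases a
  · exact Bool.false_le b
  · exact hgh (hfg ha) hb

end PartialMaps

/-- Let `L` be a bounded lattice, `X = D♭(L)`,
`φ ∈ MPE(X,2)` and `f, g ∈ MPH(L,2_B)`. Then (i) if `f ≤₂ g` and `φ(f) = 0`
then `φ(g) = 0`; (ii) if `f ≤₁ g` and `φ(f) = 1` then `φ(g) = 1`. -/
theorem stmt_6 (L : Type*) [Lattice L] [BoundedOrder L]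
    (φ : PMap (MPHsub L)) (hφ : φ ∈ MPE (EM L)) (f g : MPHsub L) :
    (le2 f.1 g.1 → φ f = some false → φ g = some false) ∧
    (le1 f.1 g.1 → φ f = some true → φ g = some true) :=
  ⟨fun hfg => MPE.eq_false_of_forall_rel_imp hφ (ErelP.refl g.1) fun _ hx => hx.of_le2 hfg,
    fun hfg => MPE.eq_true_of_forall_rel_imp hφ (ErelP.refl g.1) fun _ hy => hy.of_le1 hfg⟩

end CanExt
end
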